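/- Let q be a complex number with |q| < 1, let n ≥ 1 and m ≥ 0 be integers, and let μ be a partition with μ₁ ≤ n. Then q^{m(m−1)/2 + n(μ)} [n, m] [n, μ] = Σ_{λ} q^{n(λ)} [n, λ] ∏_{i≥1} [λ_i − λ_{i+1}, λ_i − μ_i], where the sum is over all partitions λ such that λ/μ is an m-horizontal strip, i.e. |λ| = |μ| + m and λ_i ≥ μ_i ≥ λ_{i+1} for all i ≥ 1 (the product over i is finite, and terms with λ₁ > n vanish by the convention [n, λ] = 0). -/

import Mathlib

open scoped BigOperators Classical

/-- The finite q-Pochhammer symbol `(x;q)_n = ∏_{j=0}^{n-1} (1 - x q^j)`. -/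
noncomputable def qPoch (x q : ℂ) (n : ℕ) : ℂ :=
  ∏ j ∈ Finset.range n, (1 - x * q ^ j)

/-- Partitions: weakly decreasing sequences of naturals with finitely many nonzero terms
(index `i` carries `λ_{i+1}`). -/
def Ptn : Type :=
  {f : ℕ → ℕ // Antitone f ∧ ∃ N, ∀ i, N ≤ i → f i = 0}

/-- The size `|λ| = Σ_i λ_i` of a partition. -/
noncomputable def Ptn.size (L : Ptn) : ℕ := ∑' i, L.1 i

/-- `n(λ) = Σ_i λ_i (λ_i - 1) / 2`. -/
noncomputable def Ptn.nfun (L : Ptn) : ℕ := ∑' i, Nat.choose (L.1 i) 2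

/-- The Gaussian q-binomial coefficient `[n, m] = (q)_n / ((q)_{n-m} (q)_m)`,
with the convention that it vanishes when `m > n`. -/
noncomputable def gaussBinom (q : ℂ) (n m : ℕ) : ℂ :=
  if m ≤ n then qPoch q q n / (qPoch q q (n - m) * qPoch q q m) else 0

/-- The q-binomial coefficient `[n, λ] = (q)_n / ((q)_{n-λ₁} (q)_λ)` for a partition `λ`,
with the convention that it vanishes when `λ₁ > n`. -/
noncomputable def qBinomP (q : ℂ) (n : ℕ) (L : Ptn) : ℂ :=
  if L.1 0 ≤ n then
    qPoch q q n / (qPoch q q (n - L.1 0) * ∏' i : ℕ, qPoch q q (L.1 i - L.1 (i + 1)))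
  else 0

/-- `λ/μ` is an `m`-horizontal strip: `|λ| = |μ| + m` and `λ_i ≥ μ_i ≥ λ_{i+1}` for all `i`. -/
def IsHorizontalStrip (L M : Ptn) (m : ℕ) : Prop :=
  L.size = M.size + m ∧ ∀ i, M.1 i ≤ L.1 i ∧ L.1 (i + 1) ≤ M.1 i


/-!
Write `λ = μ + θ`. Expanding all q-binomials into q-Pochhammer symbols, the term of `λ` becomes
`q^{n(μ)} [n, μ] ∏ᵢ q^{C(θᵢ, 2) + θᵢ μᵢ} [μᵢ₋₁ - μᵢ, θᵢ]` with `μ₋₁ = n`. The factor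
`[μᵢ₋₁ - μᵢ, θᵢ]` vanishes unless `θᵢ ≤ μᵢ₋₁ - μᵢ`, which for `i ≥ 1` is the interlacing
condition, so the sum may be extended over all compositions `θ` of `m`. By the q-binomial theorem
that sum is the coefficient of `t^m` in `∏_{j<n} (1 + q^j t)`, split into the blocks
`μᵢ ≤ j < μᵢ₋₁`; hence it equals `q^{C(m, 2)} [n, m]`.
-/

open Finset Polynomial

section GaussianBinomial

variable {q : ℂ}

lemma qPoch_zero (x : ℂ) : qPoch x q 0 = 1 :=
  prod_range_zero _

lemma qPoch_self_succ (n : ℕ) : qPoch q q (n + 1) = qPoch q q n * (1 - q ^ (n + 1)) := by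
  rw [qPoch, prod_range_succ, pow_succ']
  rfl

lemma qPoch_self_ne_zero (hq : ¬IsOfFinOrder q) (n : ℕ) : qPoch q q n ≠ 0 := by
  refine prod_ne_zero_iff.2 fun j _ h => hq (isOfFinOrder_iff_pow_eq_one.2 ⟨j + 1, j.succ_pos, ?_⟩)
  rw [pow_succ']
  linear_combination -h

lemma prod_qPoch_self_ne_zero (hq : ¬IsOfFinOrder q) (s : Finset ℕ) (f : ℕ → ℕ) :
    ∏ i ∈ s, qPoch q q (f i) ≠ 0 :=
  prod_ne_zero_iff.2 fun i _ => qPoch_self_ne_zero hq (f i)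

lemma gaussBinom_of_lt {n k : ℕ} (h : n < k) : gaussBinom q n k = 0 :=
  if_neg h.not_ge

lemma gaussBinom_self (hq : ¬IsOfFinOrder q) (n : ℕ) : gaussBinom q n n = 1 := by
  simp [gaussBinom, qPoch_zero, qPoch_self_ne_zero hq]

lemma gaussBinom_zero_right (hq : ¬IsOfFinOrder q) (n : ℕ) : gaussBinom q n 0 = 1 := by
  simp [gaussBinom, qPoch_zero, qPoch_self_ne_zero hq]

lemma gaussBinom_zero_left (k : ℕ) : gaussBinom q 0 k = if k = 0 then 1 else 0 := by
  rcases k.eq_zero_or_pos with rfl | hk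
  · simp [gaussBinom, qPoch_zero]
  · rw [gaussBinom_of_lt hk, if_neg hk.ne']

lemma gaussBinom_sub_sub {a b c : ℕ} (hab : a ≤ b) (hbc : b ≤ c) :
    gaussBinom q (c - a) (b - a) = qPoch q q (c - a) / (qPoch q q (c - b) * qPoch q q (b - a)) := by
  rw [gaussBinom, if_pos (by omega), show c - a - (b - a) = c - b by omega]

lemma gaussBinom_sub_sub' {a b c : ℕ} (hab : a ≤ b) (hbc : b ≤ c) :
    gaussBinom q (c - a) (c - b) = qPoch q q (c - a) / (qPoch q q (b - a) * qPoch q q (c - b)) := by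
  rw [gaussBinom, if_pos (by omega), show c - a - (c - b) = b - a by omega]

theorem gaussBinom_succ_succ (hq : ¬IsOfFinOrder q) (n k : ℕ) :
    gaussBinom q (n + 1) (k + 1) = gaussBinom q n (k + 1) + q ^ (n - k) * gaussBinom q n k := by
  rcases lt_trichotomy n k with h | rfl | h
  · rw [gaussBinom_of_lt h, gaussBinom_of_lt (by omega), gaussBinom_of_lt (by omega)]
    ring
  · rw [gaussBinom_self hq, gaussBinom_self hq, gaussBinom_of_lt n.lt_succ_self]
    simp
  · obtain ⟨d, rfl⟩ := Nat.exists_eq_add_of_lt h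
    have hne := qPoch_self_ne_zero hq
    have hd : (1 : ℂ) - q ^ (d + 1) ≠ 0 := by
      simpa [qPoch_self_succ, hne] using hne (d + 1)
    have hk : (1 : ℂ) - q ^ (k + 1) ≠ 0 := by
      simpa [qPoch_self_succ, hne] using hne (k + 1)
    simp only [gaussBinom, if_pos (show k + 1 ≤ k + d + 1 + 1 by omega),
      if_pos (show k + 1 ≤ k + d + 1 by omega), if_pos (show k ≤ k + d + 1 by omega),
      show k + d + 1 + 1 - (k + 1) = d + 1 by omega, show k + d + 1 - (k + 1) = d by omega,
      show k + d + 1 - k = d + 1 by omega, qPoch_self_succ (k + d + 1), qPoch_self_succ d,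
      qPoch_self_succ k]
    field_simp
    ring

/-- The q-binomial theorem, for the factors `1 + q^j t` with `a ≤ j < b`. -/
theorem coeff_prod_Ico_one_add_C_mul_X (hq : ¬IsOfFinOrder q) {a b : ℕ} (hab : a ≤ b) (k : ℕ) :
    (∏ j ∈ Ico a b, (1 + C (q ^ j) * X)).coeff k
      = q ^ (k.choose 2 + k * a) * gaussBinom q (b - a) k := by
  induction b, hab using Nat.le_induction generalizing k with
  | base => rcases k with _ | k <;> simp [gaussBinom_zero_left, coeff_one]
  | succ b hab ih =>
    rw [prod_Ico_succ_top hab, mul_add, mul_one, ← mul_assoc, mul_comm _ (C _)]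
    rcases k with _ | k
    · rw [coeff_add, coeff_mul_X_zero, add_zero, ih]
      simp [gaussBinom_zero_right hq]
    rw [coeff_add, coeff_mul_X, coeff_C_mul, ih, ih, show b + 1 - a = b - a + 1 by omega,
      gaussBinom_succ_succ hq, Nat.choose_succ_succ', Nat.choose_one_right]
    rcases le_or_gt k (b - a) with hk | hk
    · obtain ⟨d, rfl⟩ : ∃ d, b = a + k + d := ⟨b - a - k, by omega⟩
      rw [show a + k + d - a - k = d by omega]
      ring
    · rw [gaussBinom_of_lt hk]
      ring

end GaussianBinomial

theorem Polynomial.coeff_prod_eq_sum_piAntidiag {R ι : Type*} [CommSemiring R] [DecidableEq ι]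
    (s : Finset ι) (f : ι → R[X]) (m : ℕ) :
    (∏ i ∈ s, f i).coeff m = ∑ θ ∈ s.piAntidiag m, ∏ i ∈ s, (f i).coeff (θ i) := by
  rw [← coeff_coe, ← coeToPowerSeries.ringHom_apply, map_prod, PowerSeries.coeff_prod,
    finsuppAntidiag, sum_map]
  refine (sum_congr rfl fun θ _ => ?_).trans
    (sum_attach _ fun θ : ι → ℕ => ∏ i ∈ s, (f i).coeff (θ i))
  simp [coeToPowerSeries.ringHom_apply]

lemma Finset.prod_Ico_eq_prod_range_prod_Ico {M : Type*} [CommMonoid M] (f : ℕ → M) {s : ℕ → ℕ}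
    (hs : Antitone s) (K : ℕ) :
    ∏ j ∈ Ico (s K) (s 0), f j = ∏ i ∈ range K, ∏ j ∈ Ico (s (i + 1)) (s i), f j := by
  induction K with
  | zero => simp
  | succ K ih =>
    rw [prod_range_succ, ← ih, mul_comm, prod_Ico_consecutive _ (hs K.le_succ) (hs K.zero_le)]

/-- The q-Vandermonde identity for the chain `s 0 ≥ s 1 ≥ ⋯ ≥ s K`. -/
theorem sum_piAntidiag_prod_gaussBinom {q : ℂ} (hq : ¬IsOfFinOrder q) {s : ℕ → ℕ}
    (hs : Antitone s) (K m : ℕ) :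
    ∑ θ ∈ (range K).piAntidiag m, ∏ i ∈ range K,
        q ^ ((θ i).choose 2 + θ i * s (i + 1)) * gaussBinom q (s i - s (i + 1)) (θ i)
      = q ^ (m.choose 2 + m * s K) * gaussBinom q (s 0 - s K) m := by
  rw [← coeff_prod_Ico_one_add_C_mul_X hq (hs K.zero_le),
    prod_Ico_eq_prod_range_prod_Ico _ hs, coeff_prod_eq_sum_piAntidiag]
  exact sum_congr rfl fun θ _ => prod_congr rfl fun i _ =>
    (coeff_prod_Ico_one_add_C_mul_X hq (hs i.le_succ) _).symm

def seqCons (a : ℕ) (f : ℕ → ℕ) : ℕ → ℕ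
  | 0 => a
  | i + 1 => f i

@[simp] lemma seqCons_zero (a : ℕ) (f : ℕ → ℕ) : seqCons a f 0 = a := rfl

@[simp] lemma seqCons_succ (a : ℕ) (f : ℕ → ℕ) (i : ℕ) : seqCons a f (i + 1) = f i := rfl

lemma antitone_seqCons {a : ℕ} {f : ℕ → ℕ} (hf : Antitone f) (ha : f 0 ≤ a) :
    Antitone (seqCons a f) :=
  antitone_nat_of_succ_le fun i => by cases i <;> simp [ha, hf (Nat.le_succ _)]

lemma Nat.add_choose_two (a b : ℕ) : (a + b).choose 2 = a.choose 2 + b.choose 2 + a * b := by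
  rw [Nat.add_choose_eq, Nat.sum_antidiagonal_succ, Nat.sum_antidiagonal_succ,
    Nat.antidiagonal_zero, sum_singleton]
  simp only [Nat.choose_zero_right, Nat.choose_one_right, zero_add]
  ring

namespace Ptn

lemma apply_eq_zero_of_le (L : Ptn) {K i : ℕ} (hK : L.1 K = 0) (hi : K ≤ i) : L.1 i = 0 := by
  simpa [hK] using L.2.1 hi

lemma size_eq_sum (L : Ptn) {K : ℕ} (hK : L.1 K = 0) : L.size = ∑ i ∈ range K, L.1 i :=
  tsum_eq_sum fun i hi => L.apply_eq_zero_of_le hK (by simpa using hi)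

lemma nfun_eq_sum (L : Ptn) {K : ℕ} (hK : L.1 K = 0) :
    L.nfun = ∑ i ∈ range K, (L.1 i).choose 2 :=
  tsum_eq_sum fun i hi => by simp [L.apply_eq_zero_of_le hK (by simpa using hi)]

lemma nfun_eq_add {L μ : Ptn} {K : ℕ} (hle : ∀ i, μ.1 i ≤ L.1 i) (hK : L.1 K = 0) :
    L.nfun = μ.nfun + ∑ i ∈ range K, ((L.1 i - μ.1 i).choose 2 + (L.1 i - μ.1 i) * μ.1 i) := by
  have hμK : μ.1 K = 0 := by simpa [hK] using hle K
  rw [L.nfun_eq_sum hK, μ.nfun_eq_sum hμK, ← sum_add_distrib]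
  refine sum_congr rfl fun i _ => ?_
  rw [← Nat.add_sub_of_le (hle i), Nat.add_choose_two, Nat.add_sub_cancel_left]
  ring

end Ptn

lemma qBinomP_of_lt {q : ℂ} {n : ℕ} {L : Ptn} (h : n < L.1 0) : qBinomP q n L = 0 :=
  if_neg h.not_ge

lemma qBinomP_of_le {q : ℂ} {n K : ℕ} {L : Ptn} (hK : L.1 K = 0) (h : L.1 0 ≤ n) :
    qBinomP q n L
      = qPoch q q n / (qPoch q q (n - L.1 0) * ∏ i ∈ range K, qPoch q q (L.1 i - L.1 (i + 1))) := by
  rw [qBinomP, if_pos h, tprod_eq_prod fun i hi => ?_]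
  simp [L.apply_eq_zero_of_le hK (by simpa using hi), qPoch_zero]

section Strips

variable {q : ℂ} {n K : ℕ} {L μ : Ptn}

theorem qBinomP_mul_tprod_gaussBinom (hq : ¬IsOfFinOrder q) (hμn : μ.1 0 ≤ n) (hK : μ.1 K = 0)
    (hLμ : ∀ i, μ.1 i ≤ L.1 i ∧ L.1 (i + 1) ≤ μ.1 i) :
    qBinomP q n L * ∏' i, gaussBinom q (L.1 i - L.1 (i + 1)) (L.1 i - μ.1 i)
      = qBinomP q n μ * ∏ i ∈ range (K + 1),
          gaussBinom q (seqCons n μ.1 i - seqCons n μ.1 (i + 1)) (L.1 i - μ.1 i) := by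
  have hLK : L.1 (K + 1) = 0 := by simpa [hK] using (hLμ K).2
  rw [tprod_eq_prod (s := range (K + 1)) fun i hi => by
    have hi : K + 1 ≤ i := by simpa using hi
    simp [L.apply_eq_zero_of_le hLK hi, μ.apply_eq_zero_of_le hK (K.le_succ.trans hi),
      L.apply_eq_zero_of_le hLK (hi.trans i.le_succ), gaussBinom_zero_left]]
  by_cases hL0 : n < L.1 0
  · rw [qBinomP_of_lt hL0, zero_mul, eq_comm]
    refine mul_eq_zero_of_right _ (prod_eq_zero (mem_range.2 K.succ_pos) (gaussBinom_of_lt ?_))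
    show n - μ.1 0 < L.1 0 - μ.1 0
    omega
  -- Both sides reduce to `(q)_n / ((q)_{n - λ₀} ∏ᵢ (q)_{μᵢ - λᵢ₊₁} (q)_{λᵢ - μᵢ})`.
  have hLs : ∀ i, L.1 i ≤ seqCons n μ.1 i := fun i => by cases i <;> simp [hLμ, not_lt.1 hL0]
  simp only [seqCons_succ]
  rw [qBinomP_of_le hLK (not_lt.1 hL0), qBinomP_of_le hK hμn,
    prod_congr rfl fun i _ => gaussBinom_sub_sub' (hLμ i).2 (hLμ i).1,
    prod_congr rfl fun i _ => gaussBinom_sub_sub (hLμ i).1 (hLs i),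
    prod_div_distrib, prod_div_distrib, prod_mul_distrib, prod_mul_distrib,
    prod_range_succ' (fun i => qPoch q q (seqCons n μ.1 i - μ.1 i)),
    prod_range_succ' (fun i => qPoch q q (seqCons n μ.1 i - L.1 i)),
    prod_range_succ (fun i => qPoch q q (μ.1 i - L.1 (i + 1)))]
  simp only [seqCons_succ, seqCons_zero, hK, hLK, Nat.sub_self, qPoch_zero, mul_one]
  field_simp [qPoch_self_ne_zero hq, prod_qPoch_self_ne_zero hq]

theorem pow_nfun_mul_qBinomP_mul_tprod_gaussBinom (hq : ¬IsOfFinOrder q) (hμn : μ.1 0 ≤ n)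
    (hK : μ.1 K = 0) (hLμ : ∀ i, μ.1 i ≤ L.1 i ∧ L.1 (i + 1) ≤ μ.1 i) :
    q ^ L.nfun * qBinomP q n L * ∏' i, gaussBinom q (L.1 i - L.1 (i + 1)) (L.1 i - μ.1 i)
      = q ^ μ.nfun * qBinomP q n μ * ∏ i ∈ range (K + 1),
          q ^ ((L.1 i - μ.1 i).choose 2 + (L.1 i - μ.1 i) * seqCons n μ.1 (i + 1))
            * gaussBinom q (seqCons n μ.1 i - seqCons n μ.1 (i + 1)) (L.1 i - μ.1 i) := by
  have hLK : L.1 (K + 1) = 0 := by simpa [hK] using (hLμ K).2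
  rw [L.nfun_eq_add (fun i => (hLμ i).1) hLK, pow_add, mul_assoc,
    qBinomP_mul_tprod_gaussBinom hq hμn hK hLμ, prod_mul_distrib, prod_pow_eq_pow_sum]
  simp only [seqCons_succ]
  ring

end Strips

/-- The row increments `λ - μ` of the horizontal `m`-strips `λ` over `μ`, when `μ K = 0`. -/
noncomputable def stripIncrements (μ : Ptn) (K m : ℕ) : Finset (ℕ → ℕ) :=
  {θ ∈ (range (K + 1)).piAntidiag m | ∀ i, θ (i + 1) ≤ μ.1 i - μ.1 (i + 1)}

lemma mem_stripIncrements {μ : Ptn} {K m : ℕ} {θ : ℕ → ℕ} :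
    θ ∈ stripIncrements μ K m ↔ (∑ i ∈ range (K + 1), θ i = m ∧ ∀ i, θ i ≠ 0 → i < K + 1)
      ∧ ∀ i, θ (i + 1) ≤ μ.1 i - μ.1 (i + 1) := by
  simp [stripIncrements]

noncomputable def stripEquiv (μ : Ptn) {K : ℕ} (hK : μ.1 K = 0) (m : ℕ) :
    {θ // θ ∈ stripIncrements μ K m} ≃ {L : Ptn // IsHorizontalStrip L μ m} where
  toFun θ :=
    have hθ := mem_stripIncrements.1 θ.2
    have hμ : ∀ i, K + 1 ≤ i → μ.1 i = 0 := fun i hi => μ.apply_eq_zero_of_le hK (by omega)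
    have hθ0 : ∀ i, K + 1 ≤ i → θ.1 i = 0 := fun i hi => by
      by_contra h
      exact absurd (hθ.1.2 i h) (by omega)
    have hstep : ∀ i, μ.1 (i + 1) + θ.1 (i + 1) ≤ μ.1 i := fun i => by
      have := hθ.2 i; have : μ.1 (i + 1) ≤ μ.1 i := μ.2.1 (Nat.le_add_right i 1); omega
    let L : Ptn := ⟨fun i => μ.1 i + θ.1 i,
      antitone_nat_of_succ_le fun i => (hstep i).trans le_self_add,
      K + 1, fun i hi => by simp [hμ i hi, hθ0 i hi]⟩
    have hLK : L.1 (K + 1) = 0 := by simp [L, hμ, hθ0]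
    ⟨L, by rw [L.size_eq_sum hLK, sum_add_distrib, ← μ.size_eq_sum (hμ _ le_rfl), hθ.1.1],
      fun i => ⟨Nat.le_add_right _ _, hstep i⟩⟩
  invFun L :=
    have hLK : L.1.1 (K + 1) = 0 := by simpa [hK] using (L.2.2 K).2
    ⟨fun i => L.1.1 i - μ.1 i, mem_stripIncrements.2
      ⟨⟨by rw [sum_tsub_distrib _ fun i _ => (L.2.2 i).1, ← L.1.size_eq_sum hLK,
          ← μ.size_eq_sum (μ.apply_eq_zero_of_le hK K.le_succ), L.2.1, Nat.add_sub_cancel_left],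
        fun i hi => by
          by_contra h
          exact hi (by simp [L.1.apply_eq_zero_of_le hLK (not_lt.1 h)])⟩,
      fun i => by have := (L.2.2 i).2; omega⟩⟩
  left_inv θ := Subtype.ext (funext fun i => Nat.add_sub_cancel_left _ _)
  right_inv L := Subtype.ext (Subtype.ext (funext fun i => Nat.add_sub_of_le (L.2.2 i).1))

theorem q_pieri_general (q : ℂ) (hq : ‖q‖ < 1) (n m : ℕ)
    (mu : Ptn) (hmu : mu.1 0 ≤ n) :
    q ^ (Nat.choose m 2 + mu.nfun) * gaussBinom q n m * qBinomP q n mu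
      = ∑' L : {L : Ptn // IsHorizontalStrip L mu m},
          q ^ (L.1.nfun) * qBinomP q n L.1 *
            ∏' i : ℕ, gaussBinom q (L.1.1 i - L.1.1 (i + 1)) (L.1.1 i - mu.1 i) := by
  have hq' : ¬IsOfFinOrder q := fun h => hq.ne h.norm_eq_one
  obtain ⟨K, hK⟩ : ∃ K, mu.1 K = 0 := let ⟨N, hN⟩ := mu.2.2; ⟨N, hN N le_rfl⟩
  set s := seqCons n mu.1
  set G : (ℕ → ℕ) → ℂ := fun θ => ∏ i ∈ range (K + 1),
    q ^ ((θ i).choose 2 + θ i * s (i + 1)) * gaussBinom q (s i - s (i + 1)) (θ i)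
  have hG : ∀ θ ∈ (range (K + 1)).piAntidiag m, G θ ≠ 0 →
      ∀ i, θ (i + 1) ≤ mu.1 i - mu.1 (i + 1) := by
    intro θ hθ hGθ i
    by_contra h
    have hi : i + 1 ∈ range (K + 1) := (mem_piAntidiag.1 hθ).2 _ (by omega)
    exact hGθ (prod_eq_zero hi (by rw [gaussBinom_of_lt (by simpa [s] using h), mul_zero]))
  calc _ = q ^ mu.nfun * qBinomP q n mu * ∑ θ ∈ (range (K + 1)).piAntidiag m, G θ := by
        rw [sum_piAntidiag_prod_gaussBinom hq' (antitone_seqCons mu.2.1 hmu)]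
        simp only [seqCons_succ, seqCons_zero, hK, mul_zero, add_zero, Nat.sub_zero, pow_add]
        ring
    _ = ∑' θ : {θ // θ ∈ stripIncrements mu K m}, q ^ mu.nfun * qBinomP q n mu * G θ := by
        rw [Finset.tsum_subtype _ fun θ => q ^ mu.nfun * qBinomP q n mu * G θ,
          stripIncrements, ← mul_sum, sum_filter_of_ne hG]
    _ = ∑' L : {L : Ptn // IsHorizontalStrip L mu m},
          q ^ mu.nfun * qBinomP q n mu * G fun i => L.1.1 i - mu.1 i :=
        ((stripEquiv mu hK m).symm.tsum_eq _).symm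
    _ = _ := tsum_congr fun L => (pow_nfun_mul_qBinomP_mul_tprod_gaussBinom hq' hmu hK L.2.2).symm

theorem q_pieri (q : ℂ) (hq : ‖q‖ < 1) (n m : ℕ) (hn : 1 ≤ n)
    (mu : Ptn) (hmu : mu.1 0 ≤ n) :
    q ^ (Nat.choose m 2 + mu.nfun) * gaussBinom q n m * qBinomP q n mu
      = ∑' L : {L : Ptn // IsHorizontalStrip L mu m},
          q ^ (L.1.nfun) * qBinomP q n L.1 *
            ∏' i : ℕ, gaussBinom q (L.1.1 i - L.1.1 (i + 1)) (L.1.1 i - mu.1 i) :=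
  q_pieri_general q hq n m mu hmu
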